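/- Let $s=\{s_n\}_{n=1}^\infty\subset(0,1]$ be any sequence. For every simple function $h=\sum_{k=1}^m b_k\chi_{B_k}$ with $b_k>0$ and nested measurable sets $B_1\subset B_2\subset\cdots\subset B_m\subset[0,1]$, one has $\|h\|_{\varphi,\psi}\le \sum_{k=1}^m b_k\,\varphi_s(\lambda(B_k))$. -/

import Mathlib

open MeasureTheory ENNReal Set Filter Topology

noncomputable section

/-- Lebesgue measure restricted to the interval `[0,1]`. -/
def μ01 : Measure ℝ := volume.restrict (Set.Icc 0 1)

/-- `φ : [0,1] → [0,∞)` is concave, non-decreasing, and vanishes only at the origin. -/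
structure IsPhi (φ : ℝ → ℝ) : Prop where
  concave : ConcaveOn ℝ (Set.Icc 0 1) φ
  mono : MonotoneOn φ (Set.Icc 0 1)
  zero : φ 0 = 0
  pos : ∀ t : ℝ, 0 < t → t ≤ 1 → 0 < φ t

/-- `ψ : [0,∞) → [0,∞)` is concave, non-decreasing, and vanishes only at the origin. -/
structure IsPsi (ψ : ℝ → ℝ) : Prop where
  concave : ConcaveOn ℝ (Set.Ici 0) ψ
  mono : MonotoneOn ψ (Set.Ici 0)
  zero : ψ 0 = 0
  pos : ∀ t : ℝ, 0 < t → 0 < ψ t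

/-- A sequence `g` of nonnegative `L^∞` functions with `|f| ≤ ∑ₙ gₙ` a.e. -/
def Admissible (f : ℝ → ℝ) (g : ℕ → ℝ → ℝ) : Prop :=
  (∀ n, AEMeasurable (g n) μ01) ∧
  (∀ n, eLpNorm (g n) ⊤ μ01 < ⊤) ∧
  (∀ n x, 0 ≤ g n x) ∧
  (∀ᵐ x ∂μ01, ENNReal.ofReal |f x| ≤ ∑' n : ℕ, ENNReal.ofReal (g n x))

/-- The cost `∑ₙ ψ(n) ‖gₙ‖_∞ φ(‖gₙ‖₁/‖gₙ‖_∞)` of a decomposition (index shifted by 1;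
`0/0 = 0` by the `ℝ≥0∞` division convention, and `φ 0 = 0`). -/
def seqCost (φ ψ : ℝ → ℝ) (g : ℕ → ℝ → ℝ) : ℝ≥0∞ :=
  ∑' n : ℕ, ENNReal.ofReal
    (ψ ((n : ℝ) + 1) * (eLpNorm (g n) ⊤ μ01).toReal *
      φ ((eLpNorm (g n) 1 μ01 / eLpNorm (g n) ⊤ μ01).toReal))

/-- The quasi-norm `‖f‖_{φ,ψ}` (equal to `∞` when no admissible decomposition exists). -/
def QANorm (φ ψ : ℝ → ℝ) (f : ℝ → ℝ) : ℝ≥0∞ :=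
  ⨅ (g : ℕ → ℝ → ℝ) (_ : Admissible f g), seqCost φ ψ g

/-- Membership in the space `QA_{φ,ψ}`. -/
def MemQA (φ ψ : ℝ → ℝ) (f : ℝ → ℝ) : Prop :=
  AEMeasurable f μ01 ∧ QANorm φ ψ f < ⊤

/-- The decreasing rearrangement `f*` of `f` on `[0,1]`. -/
def decRearr (f : ℝ → ℝ) (t : ℝ) : ℝ :=
  sInf {s : ℝ | 0 ≤ s ∧ μ01 {x | s < |f x|} ≤ ENNReal.ofReal t}

/-- The limit `ζ(0⁺)` of a non-decreasing function `ζ` on `[0,1]`. -/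
def limZero (ζ : ℝ → ℝ) : ℝ := sInf (ζ '' Set.Ioc 0 1)

/-- The Lorentz norm `‖f‖_{Λ_ζ} = ∫₀¹ f* dζ = ‖f‖_∞ ζ(0⁺) + ∫₀¹ f*(s) ζ'(s) ds`
(for `ζ` concave the derivative exists a.e. and `ζ` is absolutely continuous on `(0,1]`). -/
def lorentzNorm (ζ : ℝ → ℝ) (f : ℝ → ℝ) : ℝ≥0∞ :=
  eLpNorm f ⊤ μ01 * ENNReal.ofReal (limZero ζ) +
    ∫⁻ s in Set.Ioc (0:ℝ) 1, ENNReal.ofReal (decRearr f s * deriv ζ s)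

/-- Membership in the Lorentz space `Λ_ζ`. -/
def MemLorentz (ζ : ℝ → ℝ) (f : ℝ → ℝ) : Prop :=
  AEMeasurable f μ01 ∧ lorentzNorm ζ f < ⊤

/-- The quasi-concave function `φ_s(t) = inf_n max{sₙ,t} (φ(sₙ)/sₙ) ψ(n)` (index shifted by 1). -/
def phiSeq (φ ψ : ℝ → ℝ) (s : ℕ → ℝ) (t : ℝ) : ℝ :=
  if t = 0 then 0 else ⨅ n : ℕ, max (s n) t * (φ (s n) / s n) * ψ ((n : ℝ) + 1)

/-- The function `τ(t) = φ(t) ψ(logbar(φ(t)/t))` with `logbar t = 1 + log⁺ t`. -/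
def tauF (φ ψ : ℝ → ℝ) (t : ℝ) : ℝ :=
  if t = 0 then 0 else φ t * ψ (1 + max (Real.log (φ t / t)) 0)


/-!
Choose an index `nₖ` for every `k` and group the summands of `h` accordingly:
`gₙ = ∑_{nₖ = n} bₖ χ_{Bₖ}`. For a nonnegative function with `‖g‖_∞ = A` and `‖g‖₁ = L ≤ A`,
concavity of `φ` and `φ 0 = 0` give `A φ(L/A) ≤ max(A a, L) φ(a)/a` for every `a ∈ (0,1]`
(compare `φ(L/A)` with `φ a` when `L/A ≤ a`, and use that `φ(t)/t` decreases otherwise).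
With `a = sₙ`, `A ≤ ∑ bₖ` and `L = ∑ bₖ λ(Bₖ)`, the `n`-th term of the cost of `(gₙ)` is at most
`∑_{nₖ = n} bₖ max(sₙ, λ(Bₖ)) (φ(sₙ)/sₙ) ψ(n)`. The infimum over the choices `(nₖ)` splits
over `k` and yields `∑ₖ bₖ φ_s(λ(Bₖ))`, once the sets of measure zero, which `‖·‖_{φ,ψ}` does
not see, have been dropped.
-/
instance isProbabilityMeasure_μ01 : IsProbabilityMeasure μ01 :=
  ⟨by simp [μ01, Real.volume_Icc]⟩

namespace IsPhi

variable {φ : ℝ → ℝ}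

lemma nonneg (hφ : IsPhi φ) {t : ℝ} (ht₀ : 0 ≤ t) (ht₁ : t ≤ 1) : 0 ≤ φ t :=
  hφ.zero ▸ hφ.mono ⟨le_rfl, zero_le_one⟩ ⟨ht₀, ht₁⟩ ht₀

lemma apply_div_le_apply_div_of_le (hφ : IsPhi φ) {a t : ℝ} (ha : 0 < a) (hat : a ≤ t) (ht : t ≤ 1) :
    φ t / t ≤ φ a / a := by
  have h := hφ.concave.neg.secant_mono (a := 0) ⟨le_rfl, zero_le_one⟩ ⟨ha.le, hat.trans ht⟩
    ⟨ha.le.trans hat, ht⟩ ha.ne' (ha.trans_le hat).ne' hat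
  simp only [Pi.neg_apply, hφ.zero, sub_zero, neg_zero, neg_div] at h
  linarith

lemma mul_apply_div_le (hφ : IsPhi φ) {A L a : ℝ} (hL : 0 ≤ L) (hLA : L ≤ A) (ha : 0 < a)
    (ha₁ : a ≤ 1) :
    A * φ (L / A) ≤ max (A * a) L * (φ a / a) := by
  have hr₀ : 0 ≤ L / A := div_nonneg hL (hL.trans hLA)
  have hr₁ : L / A ≤ 1 := div_le_one_of_le₀ hLA (hL.trans hLA)
  rcases le_or_gt (L / A) a with hra | har
  · calc A * φ (L / A) ≤ A * φ a :=
          mul_le_mul_of_nonneg_left (hφ.mono ⟨hr₀, hr₁⟩ ⟨ha.le, ha₁⟩ hra) (hL.trans hLA)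
      _ = A * a * (φ a / a) := by field_simp
      _ ≤ max (A * a) L * (φ a / a) :=
          mul_le_mul_of_nonneg_right (le_max_left _ _) (div_nonneg (hφ.nonneg ha.le ha₁) ha.le)
  · have hA : 0 < A := lt_of_le_of_ne (hL.trans hLA) (by rintro rfl; simp at har; linarith)
    have hr : L / A ≠ 0 := (ha.trans har).ne'
    calc A * φ (L / A) = A * (L / A) * (φ (L / A) / (L / A)) := by
          rw [mul_assoc, mul_div_cancel₀ _ hr]
      _ = L * (φ (L / A) / (L / A)) := by rw [mul_div_cancel₀ _ hA.ne']
      _ ≤ L * (φ a / a) := mul_le_mul_of_nonneg_left (hφ.apply_div_le_apply_div_of_le ha har.le hr₁) hL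
      _ ≤ max (A * a) L * (φ a / a) :=
          mul_le_mul_of_nonneg_right (le_max_right _ _) (div_nonneg (hφ.nonneg ha.le ha₁) ha.le)

end IsPhi

lemma IsPsi.nonneg {ψ : ℝ → ℝ} (hψ : IsPsi ψ) {t : ℝ} (ht : 0 ≤ t) : 0 ≤ ψ t :=
  hψ.zero ▸ hψ.mono (Set.mem_Ici.2 le_rfl) ht ht

lemma ENNReal.iInf_pi_sum {α ι : Type*} [Nonempty ι] (s : Finset α) (f : α → ι → ℝ≥0∞) :
    ⨅ g : α → ι, ∑ a ∈ s, f a (g a) = ∑ a ∈ s, ⨅ i, f a i := by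
  classical
  rw [ENNReal.iInf_sum fun _ g h => ⟨fun a => if f a (g a) ≤ f a (h a) then g a else h a,
    fun a _ => by dsimp only; split_ifs <;> grind⟩]
  exact Finset.sum_congr rfl fun a _ =>
    ((Function.surjective_eval (β := fun _ => ι) a).iInf_comp (f a) :)

section IndicatorSum

variable {α ι : Type*} (K : Finset ι) {b : ι → ℝ} {B : ι → Set α}

def indicatorSum (K : Finset ι) (b : ι → ℝ) (B : ι → Set α) (x : α) : ℝ :=
  ∑ k ∈ K, b k * (B k).indicator (fun _ => (1:ℝ)) x

lemma ofReal_indicatorSum (hb : ∀ k, 0 ≤ b k) (x : α) :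
    ENNReal.ofReal (indicatorSum K b B x)
      = ∑ k ∈ K, (B k).indicator (fun _ => ENNReal.ofReal (b k)) x := by
  rw [indicatorSum, ENNReal.ofReal_sum_of_nonneg fun k _ =>
    mul_nonneg (hb k) (Set.indicator_nonneg (fun _ _ => zero_le_one) x)]
  refine Finset.sum_congr rfl fun k _ => ?_
  by_cases hx : x ∈ B k <;> simp [hx]

lemma indicatorSum_nonneg (hb : ∀ k, 0 ≤ b k) (x : α) : 0 ≤ indicatorSum K b B x :=
  Finset.sum_nonneg fun k _ => mul_nonneg (hb k) (Set.indicator_nonneg (fun _ _ => zero_le_one) x)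

lemma indicatorSum_le (hb : ∀ k, 0 ≤ b k) (x : α) : indicatorSum K b B x ≤ ∑ k ∈ K, b k :=
  Finset.sum_le_sum fun k _ => by by_cases hx : x ∈ B k <;> simp [hx, hb k]

variable [MeasurableSpace α] {μ : Measure α}

lemma measurable_indicatorSum (hB : ∀ k, MeasurableSet (B k)) :
    Measurable (indicatorSum K b B) :=
  Finset.measurable_sum _ fun k _ => (measurable_const.indicator (hB k)).const_mul (b k)

lemma eLpNorm_top_indicatorSum_le (hb : ∀ k, 0 ≤ b k) :
    eLpNorm (indicatorSum K b B) ⊤ μ ≤ ENNReal.ofReal (∑ k ∈ K, b k) := by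
  rw [eLpNorm_exponent_top]
  refine eLpNormEssSup_le_of_ae_bound (Eventually.of_forall fun x => ?_)
  rw [Real.norm_of_nonneg (indicatorSum_nonneg K hb x)]
  exact indicatorSum_le K hb x

lemma eLpNorm_one_indicatorSum (hb : ∀ k, 0 ≤ b k) (hB : ∀ k, MeasurableSet (B k)) :
    eLpNorm (indicatorSum K b B) 1 μ = ∑ k ∈ K, ENNReal.ofReal (b k) * μ (B k) := by
  simp_rw [eLpNorm_one_eq_lintegral_enorm, Real.enorm_of_nonneg (indicatorSum_nonneg K hb _),
    ofReal_indicatorSum K hb]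
  rw [lintegral_finsetSum _ fun k _ => measurable_const.indicator (hB k)]
  exact Finset.sum_congr rfl fun k _ => lintegral_indicator_const (hB k) _

lemma toReal_eLpNorm_one_indicatorSum [IsFiniteMeasure μ] (hb : ∀ k, 0 ≤ b k)
    (hB : ∀ k, MeasurableSet (B k)) :
    (eLpNorm (indicatorSum K b B) 1 μ).toReal = ∑ k ∈ K, b k * (μ (B k)).toReal := by
  rw [eLpNorm_one_indicatorSum K hb hB, ENNReal.toReal_sum fun k _ =>
    ENNReal.mul_ne_top ENNReal.ofReal_ne_top (measure_ne_top μ _)]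
  simp [ENNReal.toReal_ofReal (hb _)]

lemma indicatorSum_ae_eq_filter [DecidablePred fun k => μ (B k) ≠ 0] :
    indicatorSum K b B =ᵐ[μ] indicatorSum {k ∈ K | μ (B k) ≠ 0} b B := by
  have h : ∀ᵐ x ∂μ, ∀ k ∈ K, μ (B k) = 0 → x ∉ B k := by
    refine (eventually_all_finset K).2 fun k _ => ?_
    by_cases hk : μ (B k) = 0
    · filter_upwards [measure_eq_zero_iff_ae_notMem.1 hk] with x hx using fun _ => hx
    · exact Eventually.of_forall fun x h => absurd h hk
  filter_upwards [h] with x hx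
  refine (Finset.sum_filter_of_ne fun k hk hne => fun h0 => ?_).symm
  exact hne (by simp [Set.indicator_of_notMem (hx k hk h0)])

lemma IsPhi.toReal_eLpNorm_mul_apply_le {φ : ℝ → ℝ} (hφ : IsPhi φ) [IsProbabilityMeasure μ]
    {a : ℝ} (ha : 0 < a) (ha₁ : a ≤ 1)
    (hb : ∀ k, 0 ≤ b k) (hB : ∀ k, MeasurableSet (B k)) :
    (eLpNorm (indicatorSum K b B) ⊤ μ).toReal *
        φ ((eLpNorm (indicatorSum K b B) 1 μ / eLpNorm (indicatorSum K b B) ⊤ μ).toReal)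
      ≤ (∑ k ∈ K, b k * max a (μ (B k)).toReal) * (φ a / a) := by
  have hA := eLpNorm_top_indicatorSum_le (μ := μ) (B := B) K hb
  have hLA : eLpNorm (indicatorSum K b B) 1 μ ≤ eLpNorm (indicatorSum K b B) ⊤ μ :=
    eLpNorm_le_eLpNorm_of_exponent_le le_top (measurable_indicatorSum K hB).aestronglyMeasurable
  rw [ENNReal.toReal_div]
  refine (hφ.mul_apply_div_le toReal_nonneg
    (ENNReal.toReal_mono (ne_top_of_le_ne_top ofReal_ne_top hA) hLA) ha ha₁).trans ?_
  gcongr ?_ * _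
  · exact div_nonneg (hφ.nonneg ha.le ha₁) ha.le
  rw [toReal_eLpNorm_one_indicatorSum K hb hB]
  refine max_le ?_ (Finset.sum_le_sum fun k _ =>
    mul_le_mul_of_nonneg_left (le_max_right _ _) (hb k))
  calc (eLpNorm (indicatorSum K b B) ⊤ μ).toReal * a ≤ (∑ k ∈ K, b k) * a := by
        gcongr
        exact ENNReal.toReal_le_of_le_ofReal (Finset.sum_nonneg fun k _ => hb k) hA
    _ ≤ _ := by
        rw [Finset.sum_mul]
        exact Finset.sum_le_sum fun k _ => mul_le_mul_of_nonneg_left (le_max_left _ _) (hb k)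

end IndicatorSum

def phiSeqTerm (φ ψ : ℝ → ℝ) (s : ℕ → ℝ) (n : ℕ) (t : ℝ) : ℝ :=
  max (s n) t * (φ (s n) / s n) * ψ ((n : ℝ) + 1)

lemma phiSeqTerm_nonneg {φ ψ : ℝ → ℝ} (hφ : IsPhi φ) (hψ : IsPsi ψ) {s : ℕ → ℝ} {n : ℕ}
    (hs : s n ∈ Set.Ioc (0:ℝ) 1) (t : ℝ) : 0 ≤ phiSeqTerm φ ψ s n t :=
  mul_nonneg (mul_nonneg (hs.1.le.trans (le_max_left _ _))
    (div_nonneg (hφ.nonneg hs.1.le hs.2) hs.1.le)) (hψ.nonneg (by positivity))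

lemma phiSeq_of_ne_zero {φ ψ : ℝ → ℝ} {s : ℕ → ℝ} {t : ℝ} (ht : t ≠ 0) :
    phiSeq φ ψ s t = ⨅ n, phiSeqTerm φ ψ s n t :=
  if_neg ht

lemma phiSeq_nonneg {φ ψ : ℝ → ℝ} (hφ : IsPhi φ) (hψ : IsPsi ψ) {s : ℕ → ℝ}
    (hs : ∀ n, s n ∈ Set.Ioc (0:ℝ) 1) (t : ℝ) : 0 ≤ phiSeq φ ψ s t := by
  unfold phiSeq
  split_ifs
  exacts [le_rfl, Real.iInf_nonneg fun n => phiSeqTerm_nonneg hφ hψ (hs n) t]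

lemma tsum_sum_filter_eq_sum {ι κ M : Type*} [DecidableEq κ] [AddCommMonoid M]
    [TopologicalSpace M] (K : Finset ι) (idx : ι → κ) (F : ι → M) :
    ∑' n, ∑ k ∈ K with idx k = n, F k = ∑ k ∈ K, F k := by
  rw [tsum_eq_sum (s := K.image idx) fun n hn => Finset.sum_eq_zero fun k hk => ?_]
  · exact Finset.sum_fiberwise_of_maps_to (fun k hk => Finset.mem_image_of_mem idx hk) F
  · rw [Finset.mem_filter] at hk
    exact absurd (hk.2 ▸ Finset.mem_image_of_mem idx hk.1) hn

section Decomposition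

variable {ι : Type*} (K : Finset ι) {b : ι → ℝ} {B : ι → Set ℝ}

def indicatorSumFibers (b : ι → ℝ) (B : ι → Set ℝ) (idx : ι → ℕ) (n : ℕ) : ℝ → ℝ :=
  indicatorSum {k ∈ K | idx k = n} b B

lemma admissible_indicatorSumFibers (hb : ∀ k, 0 ≤ b k) (hB : ∀ k, MeasurableSet (B k))
    (idx : ι → ℕ) : Admissible (indicatorSum K b B) (indicatorSumFibers K b B idx) := by
  refine ⟨fun n => (measurable_indicatorSum _ hB).aemeasurable,
    fun n => (eLpNorm_top_indicatorSum_le _ hb).trans_lt ofReal_lt_top,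
    fun n => indicatorSum_nonneg _ hb, Eventually.of_forall fun x => le_of_eq ?_⟩
  simp only [indicatorSumFibers, abs_of_nonneg (indicatorSum_nonneg K hb x),
    ofReal_indicatorSum _ hb, tsum_sum_filter_eq_sum]

lemma seqCost_indicatorSumFibers_le {φ ψ : ℝ → ℝ} (hφ : IsPhi φ) (hψ : IsPsi ψ)
    {s : ℕ → ℝ} (hs : ∀ n, s n ∈ Set.Ioc (0:ℝ) 1) (hb : ∀ k, 0 ≤ b k)
    (hB : ∀ k, MeasurableSet (B k)) (idx : ι → ℕ) :
    seqCost φ ψ (indicatorSumFibers K b B idx)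
      ≤ ∑ k ∈ K, ENNReal.ofReal (b k * phiSeqTerm φ ψ s (idx k) (μ01 (B k)).toReal) := by
  rw [seqCost, ← tsum_sum_filter_eq_sum K idx]
  refine ENNReal.tsum_le_tsum fun n => ?_
  rw [← ENNReal.ofReal_sum_of_nonneg fun k _ =>
    mul_nonneg (hb k) (phiSeqTerm_nonneg hφ hψ (hs _) _)]
  refine ENNReal.ofReal_le_ofReal ?_
  calc _ = (eLpNorm (indicatorSumFibers K b B idx n) ⊤ μ01).toReal *
          φ ((eLpNorm (indicatorSumFibers K b B idx n) 1 μ01 /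
            eLpNorm (indicatorSumFibers K b B idx n) ⊤ μ01).toReal) * ψ ((n : ℝ) + 1) := by
        ring
    _ ≤ (∑ k ∈ K with idx k = n, b k * max (s n) (μ01 (B k)).toReal) * (φ (s n) / s n) *
          ψ ((n : ℝ) + 1) := by
        gcongr ?_ * _
        · exact hψ.nonneg (by positivity)
        · exact hφ.toReal_eLpNorm_mul_apply_le _ (hs n).1 (hs n).2 hb hB
    _ = _ := by
        simp only [Finset.sum_mul]
        refine Finset.sum_congr rfl fun k hk => ?_
        rw [(Finset.mem_filter.1 hk).2, phiSeqTerm]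
        ring

lemma QANorm_indicatorSum_le {φ ψ : ℝ → ℝ} (hφ : IsPhi φ) (hψ : IsPsi ψ)
    {s : ℕ → ℝ} (hs : ∀ n, s n ∈ Set.Ioc (0:ℝ) 1) (hb : ∀ k, 0 ≤ b k)
    (hB : ∀ k, MeasurableSet (B k)) :
    QANorm φ ψ (indicatorSum K b B)
      ≤ ∑ k ∈ K, ⨅ n, ENNReal.ofReal (b k * phiSeqTerm φ ψ s n (μ01 (B k)).toReal) := by
  rw [← ENNReal.iInf_pi_sum]
  exact le_iInf fun idx => (iInf₂_le _ (admissible_indicatorSumFibers K hb hB idx)).trans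
    (seqCost_indicatorSumFibers_le K hφ hψ hs hb hB idx)

end Decomposition

lemma QANorm_congr_ae {φ ψ f f' : ℝ → ℝ} (h : f =ᵐ[μ01] f') :
    QANorm φ ψ f = QANorm φ ψ f' := by
  have hadm : ∀ g, Admissible f g ↔ Admissible f' g := fun g => and_congr_right' <|
    and_congr_right' <| and_congr_right' <| eventually_congr <| h.mono fun x hx => by rw [hx]
  simp only [QANorm, hadm]

theorem stmt12_general {φ ψ : ℝ → ℝ} (hφ : IsPhi φ) (hψ : IsPsi ψ)
    (s : ℕ → ℝ) (hs : ∀ n, s n ∈ Set.Ioc (0:ℝ) 1)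
    (m : ℕ) (b : Fin m → ℝ) (B : Fin m → Set ℝ)
    (hb : ∀ k, 0 < b k) (hBmeas : ∀ k, MeasurableSet (B k)) :
    QANorm φ ψ (fun x => ∑ k : Fin m, b k * (B k).indicator (fun _ => (1:ℝ)) x)
      ≤ ENNReal.ofReal (∑ k : Fin m, b k * phiSeq φ ψ s ((μ01 (B k)).toReal)) := by
  classical
  set K : Finset (Fin m) := {k | μ01 (B k) ≠ 0}
  have hb₀ k : 0 ≤ b k := (hb k).le
  have hK : ∀ k ∈ K, (μ01 (B k)).toReal ≠ 0 := fun k hk =>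
    ENNReal.toReal_ne_zero.2 ⟨(Finset.mem_filter.1 hk).2, measure_ne_top _ _⟩
  calc QANorm φ ψ (indicatorSum Finset.univ b B) = QANorm φ ψ (indicatorSum K b B) :=
        QANorm_congr_ae (indicatorSum_ae_eq_filter _)
    _ ≤ ∑ k ∈ K, ⨅ n, ENNReal.ofReal (b k * phiSeqTerm φ ψ s n (μ01 (B k)).toReal) :=
        QANorm_indicatorSum_le K hφ hψ hs hb₀ hBmeas
    _ = ∑ k ∈ K, ENNReal.ofReal (b k * phiSeq φ ψ s (μ01 (B k)).toReal) :=
        Finset.sum_congr rfl fun k hk => by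
          rw [phiSeq_of_ne_zero (hK k hk), Real.mul_iInf_of_nonneg (hb₀ k), ENNReal.ofReal_iInf]
    _ = ENNReal.ofReal (∑ k ∈ K, b k * phiSeq φ ψ s (μ01 (B k)).toReal) :=
        (ENNReal.ofReal_sum_of_nonneg fun k _ =>
          mul_nonneg (hb₀ k) (phiSeq_nonneg hφ hψ hs _)).symm
    _ = _ := congrArg ENNReal.ofReal <|
        Finset.sum_filter_of_ne fun k _ hne h0 => hne (by simp [phiSeq, h0])

/-- for any sequence `s ⊂ (0,1]` and any simple function
`h = ∑ₖ bₖ χ_{Bₖ}` with `bₖ > 0` and nested measurable sets `B₁ ⊆ ⋯ ⊆ Bₘ ⊆ [0,1]`,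
one has `‖h‖_{φ,ψ} ≤ ∑ₖ bₖ φ_s(λ(Bₖ))`. -/
theorem stmt12 {φ ψ : ℝ → ℝ} (hφ : IsPhi φ) (hψ : IsPsi ψ)
    (s : ℕ → ℝ) (hs : ∀ n, s n ∈ Set.Ioc (0:ℝ) 1)
    (m : ℕ) (b : Fin m → ℝ) (B : Fin m → Set ℝ)
    (hb : ∀ k, 0 < b k) (hBmeas : ∀ k, MeasurableSet (B k))
    (hBsub : ∀ k, B k ⊆ Set.Icc (0:ℝ) 1)
    (hBnested : ∀ k l : Fin m, k ≤ l → B k ⊆ B l) :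
    QANorm φ ψ (fun x => ∑ k : Fin m, b k * (B k).indicator (fun _ => (1:ℝ)) x)
      ≤ ENNReal.ofReal (∑ k : Fin m, b k * phiSeq φ ψ s ((μ01 (B k)).toReal)) :=
  stmt12_general hφ hψ s hs m b B hb hBmeas
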